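/- Let g be a nonzero finite-dimensional nilpotent real Lie algebra with a hypercomplex structure (I,J,K) whose Obata connection ∇ is flat and such that ∇_X is a nilpotent endomorphism of g for every X ∈ g. Then g_1^H = H[g,g] is a proper subspace of g. -/

import Mathlib

/-!
Flatness says exactly that `X ↦ ∇_X` is a representation of `g` on itself, and by Engel's
theorem a finite-dimensional representation by nilpotent endomorphisms has a nonzero
coinvariant quotient: the images of all `∇_X` span a proper subspace `S`. The Obata connection
is torsion-free, `∇_X Y - ∇_Y X = [X,Y]`, and `I`, `J`, `K` are parallel, so
`F [X,Y] = ∇_X (F Y) - ∇_Y (F X) ∈ S` for `F ∈ {id, I, J, K}`; hence `H[g,g] ⊆ S`.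
-/

open Submodule

section Hyper

variable {L : Type*} [LieRing L] [LieAlgebra ℝ L]

/-- A complex structure operator on a real Lie algebra: `I² = -id` and the integrability
identity `[IX,IY] = [X,Y] + I[IX,Y] + I[X,IY]` (equivalent to `g^{1,0}` being a subalgebra). -/
def IsComplexStructureOp (I : L →ₗ[ℝ] L) : Prop :=
  (∀ x, I (I x) = -x) ∧ ∀ x y : L, ⁅I x, I y⁆ = ⁅x, y⁆ + I ⁅I x, y⁆ + I ⁅x, I y⁆

/-- A hypercomplex structure: a triple of complex structure operators with `IJ = K`
(together with `I² = J² = K² = -id` this gives the quaternionic relations). -/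
structure IsHypercomplex (I J K : L →ₗ[ℝ] L) : Prop where
  hI : IsComplexStructureOp I
  hJ : IsComplexStructureOp J
  hK : IsComplexStructureOp K
  hIJ : ∀ x, I (J x) = K x

/-- The Obata connection `∇_X` as an endomorphism of `L`:
`∇_X Y = ½([X,Y] + I[IX,Y] − J[X,JY] + K[IX,JY])`. -/
noncomputable def obataOp (I J K : L →ₗ[ℝ] L) (X : L) : Module.End ℝ L :=
  (1/2 : ℝ) • (LieAlgebra.ad ℝ L X + I ∘ₗ LieAlgebra.ad ℝ L (I X)
    - J ∘ₗ LieAlgebra.ad ℝ L X ∘ₗ J + K ∘ₗ LieAlgebra.ad ℝ L (I X) ∘ₗ J)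

/-- Flatness of the Obata connection. -/
def ObataFlat (I J K : L →ₗ[ℝ] L) : Prop :=
  ∀ X Y Z : L, obataOp I J K X (obataOp I J K Y Z) - obataOp I J K Y (obataOp I J K X Z)
    = obataOp I J K ⁅X, Y⁆ Z

/-- The set of brackets of elements of a subspace `W`. -/
def bracketSet (W : Submodule ℝ L) : Set L := {z : L | ∃ x ∈ W, ∃ y ∈ W, z = ⁅x, y⁆}

/-- `H[W,W] = span([W,W] ∪ I[W,W] ∪ J[W,W] ∪ K[W,W])`. -/
def Hbr (I J K : L →ₗ[ℝ] L) (W : Submodule ℝ L) : Submodule ℝ L :=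
  span ℝ (bracketSet W ∪ I '' bracketSet W ∪ J '' bracketSet W ∪ K '' bracketSet W)

/-- The descending series `g_0^H = g`, `g_i^H = H[g_{i-1}^H, g_{i-1}^H]`. -/
def gH (I J K : L →ₗ[ℝ] L) : ℕ → Submodule ℝ L
  | 0 => ⊤
  | i + 1 => Hbr I J K (gH I J K i)

end Hyper

attribute [local instance 100] LieRing.ofAssociativeRing

section Engel

variable {R L M : Type*} [CommRing R] [LieRing L] [LieAlgebra R L] [AddCommGroup M] [Module R M]

theorem LieModule.top_lie_top_ne_top [LieRingModule L M] [LieModule R L M] [Nontrivial M]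
    [LieModule.IsNilpotent L M] :
    ⁅(⊤ : LieIdeal R L), (⊤ : LieSubmodule R L M)⁆ ≠ ⊤ := by
  intro h
  have lcs_eq_top (k : ℕ) : LieModule.lowerCentralSeries R L M k = ⊤ := by
    induction k with
    | zero => rfl
    | succ k ih => rw [LieModule.lowerCentralSeries_succ, ih, h]
  obtain ⟨k, hk⟩ := LieModule.IsNilpotent.nilpotent R L M
  exact top_ne_bot ((lcs_eq_top k).symm.trans hk)

theorem LieHom.iSup_range_lt_top [IsNoetherian R M] [Nontrivial M]
    (ρ : L →ₗ⁅R⁆ Module.End R M) (hρ : ∀ x, IsNilpotent (ρ x)) :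
    ⨆ x, LinearMap.range (ρ x) < ⊤ := by
  let _ := LieRingModule.compLieHom M ρ
  have _ := LieModule.compLieHom (R := R) M ρ
  have : LieModule.IsNilpotent L M := (LieModule.isNilpotent_iff_forall' (R := R)).mpr hρ
  let N : LieSubmodule R L M := ⁅(⊤ : LieIdeal R L), ⊤⁆
  calc ⨆ x, LinearMap.range (ρ x) ≤ N.toSubmodule := iSup_le fun x => by
        rintro _ ⟨m, rfl⟩
        exact LieSubmodule.lie_mem_lie (LieSubmodule.mem_top x) (LieSubmodule.mem_top m)
    _ < ⊤ := by
        rw [lt_top_iff_ne_top, Ne, LieSubmodule.toSubmodule_eq_top]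
        exact LieModule.top_lie_top_ne_top

end Engel

section Obata

variable {L : Type*} [LieRing L] [LieAlgebra ℝ L] {I J K : L →ₗ[ℝ] L}

lemma obataOp_apply (X Y : L) :
    obataOp I J K X Y = (1/2 : ℝ) • (⁅X, Y⁆ + I ⁅I X, Y⁆ - J ⁅X, J Y⁆ + K ⁅I X, J Y⁆) := by
  simp [obataOp, LieAlgebra.ad_apply]

noncomputable def obataHom (hflat : ObataFlat I J K) : L →ₗ⁅ℝ⁆ Module.End ℝ L where
  toFun := obataOp I J K
  map_add' X X' := by
    ext Y
    simp only [LinearMap.add_apply, obataOp_apply, map_add, add_lie]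
    module
  map_smul' t X := by
    ext Y
    simp only [LinearMap.smul_apply, RingHom.id_apply, obataOp_apply, map_smul, smul_lie]
    module
  map_lie' {X Y} := by
    ext Z
    simp [LieRing.of_associative_ring_bracket, hflat X Y Z]

namespace IsHypercomplex

variable (h : IsHypercomplex I J K)
include h

lemma J_I_J (x : L) : J (I (J x)) = I x := by
  have h1 : I (J (I (J x))) = - x := by rw [h.hIJ, h.hIJ, h.hK.1]
  have h2 := congrArg I h1
  rw [h.hI.1, map_neg] at h2
  simpa using congrArg Neg.neg h2

lemma J_I (x : L) : J (I x) = - K x := by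
  have hx : I x = - I (J (J x)) := by rw [h.hJ.1]; simp
  rw [hx, map_neg, h.J_I_J, h.hIJ]

lemma I_K (x : L) : I (K x) = - J x := by rw [← h.hIJ, h.hI.1]

lemma K_I (x : L) : K (I x) = J x := by
  rw [← h.hIJ, h.J_I, map_neg, h.I_K]; simp

lemma K_J (x : L) : K (J x) = - I x := by rw [← h.hIJ, h.hJ.1]; simp

lemma J_K (x : L) : J (K x) = I x := by rw [← h.hIJ, h.J_I_J]

lemma obataOp_sub_obataOp_swap (X Y : L) :
    obataOp I J K X Y - obataOp I J K Y X = ⁅X, Y⁆ := by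
  rw [obataOp_apply, obataOp_apply]
  have intI := h.hI.2 X Y
  have intJ := h.hJ.2 X Y
  have intK := congrArg K (h.hK.2 (J X) (I Y))
  simp only [h.K_J, h.K_I, neg_lie, map_add, map_neg, h.hK.1] at intK
  have skew : ⁅Y, X⁆ = -⁅X, Y⁆ := by rw [lie_skew]
  have skewI : I ⁅I Y, X⁆ = -(I ⁅X, I Y⁆) := by rw [← map_neg, lie_skew]
  have skewJ : J ⁅Y, J X⁆ = -(J ⁅J X, Y⁆) := by rw [← map_neg, lie_skew]
  have skewK : K ⁅J X, I Y⁆ = -(K ⁅I Y, J X⁆) := by rw [← map_neg, lie_skew]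
  linear_combination (norm := module) (-(1/2:ℝ)) • skew + (-(1/2:ℝ)) • skewI
    + (1/2:ℝ) • skewJ + (-(1/2:ℝ)) • intI + (1/2:ℝ) • intJ + (-(1/2:ℝ)) • intK
    + (-(1/2:ℝ)) • skewK

lemma obataOp_apply_I (X Y : L) : obataOp I J K X (I Y) = I (obataOp I J K X Y) := by
  rw [obataOp_apply, obataOp_apply, map_smul, h.J_I Y]
  simp only [map_add, map_sub, map_neg, lie_neg, h.hI.1, h.hIJ, h.I_K]
  have intI := congrArg I (h.hI.2 X Y)
  simp only [map_add, h.hI.1] at intI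
  have intJ₁ := h.hJ.2 (J X) (K Y)
  simp only [h.hJ.1, h.J_K, neg_lie, map_neg] at intJ₁
  have intJ₂ := h.hJ.2 (I X) Y
  simp only [h.J_I, neg_lie, map_neg] at intJ₂
  have intK₁ := h.hK.2 X (I Y)
  rw [h.K_I] at intK₁
  have intK₂ := h.hK.2 (I X) Y
  rw [h.K_I] at intK₂
  have intI' := congrArg J (h.hI.2 (K X) Y)
  simp only [h.I_K, map_add, map_neg, neg_lie, h.J_I] at intI'
  linear_combination (norm := module) (1/2:ℝ) • intI + (1/2:ℝ) • intJ₁ + (-(1/2:ℝ)) • intJ₂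
    + (-(1/2:ℝ)) • intK₁ + (1/2:ℝ) • intK₂ + (-(1/2:ℝ)) • intI'

lemma obataOp_apply_J (X Y : L) : obataOp I J K X (J Y) = J (obataOp I J K X Y) := by
  rw [obataOp_apply, obataOp_apply, map_smul, h.hJ.1 Y]
  simp only [map_add, map_sub, map_neg, lie_neg, h.J_I, h.hJ.1, h.J_K]
  module

lemma obataOp_apply_K (X Y : L) : obataOp I J K X (K Y) = K (obataOp I J K X Y) := by
  rw [← h.hIJ Y, h.obataOp_apply_I, h.obataOp_apply_J, h.hIJ]

lemma Hbr_top_le_iSup_range_obataOp :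
    Hbr I J K ⊤ ≤ ⨆ X, LinearMap.range (obataOp I J K X) := by
  set S := ⨆ X, LinearMap.range (obataOp I J K X)
  have obataOp_mem (X Y : L) : obataOp I J K X Y ∈ S :=
    Submodule.mem_iSup_of_mem X (LinearMap.mem_range_self _ Y)
  have map_lie_mem (F : L →ₗ[ℝ] L) (hF : ∀ X Y, obataOp I J K X (F Y) = F (obataOp I J K X Y))
      (X Y : L) : F ⁅X, Y⁆ ∈ S := by
    rw [← h.obataOp_sub_obataOp_swap, map_sub, ← hF, ← hF]
    exact sub_mem (obataOp_mem _ _) (obataOp_mem _ _)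
  rw [Hbr, Submodule.span_le]
  rintro _ (((⟨X, -, Y, -, rfl⟩ | ⟨_, ⟨X, -, Y, -, rfl⟩, rfl⟩) | ⟨_, ⟨X, -, Y, -, rfl⟩, rfl⟩)
    | ⟨_, ⟨X, -, Y, -, rfl⟩, rfl⟩)
  · exact map_lie_mem LinearMap.id (fun _ _ => rfl) X Y
  · exact map_lie_mem I h.obataOp_apply_I X Y
  · exact map_lie_mem J h.obataOp_apply_J X Y
  · exact map_lie_mem K h.obataOp_apply_K X Y

end IsHypercomplex

end Obata

theorem gH_one_proper_general {L : Type*} [LieRing L] [LieAlgebra ℝ L] [Nontrivial L]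
    [FiniteDimensional ℝ L]
    (I J K : L →ₗ[ℝ] L) (h : IsHypercomplex I J K)
    (hflat : ObataFlat I J K)
    (hnil : ∀ X : L, IsNilpotent (obataOp I J K X)) :
    Hbr I J K ⊤ < ⊤ :=
  h.Hbr_top_le_iSup_range_obataOp.trans_lt ((obataHom hflat).iSup_range_lt_top hnil)

/-- for a nonzero finite-dimensional nilpotent hypercomplex real Lie algebra
with flat Obata connection and each `∇_X` nilpotent, `g_1^H = H[g,g]` is a proper subspace. -/
theorem gH_one_proper {L : Type*} [LieRing L] [LieAlgebra ℝ L] [Nontrivial L]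
    [FiniteDimensional ℝ L] [LieRing.IsNilpotent L]
    (I J K : L →ₗ[ℝ] L) (h : IsHypercomplex I J K)
    (hflat : ObataFlat I J K)
    (hnil : ∀ X : L, IsNilpotent (obataOp I J K X)) :
    Hbr I J K ⊤ < ⊤ :=
  gH_one_proper_general I J K h hflat hnil
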